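/- Let d_1,...,d_m be distinct reals and 0 ≤ k ≤ m. Among all matrices Γ ∈ ℝ^{m×2} with Γ ≥ 0, row sums 1, and column sums (m−k, k), the minimum of Σ_i [Γ_{i,1}(d_i − min_j d_j) + Γ_{i,2}(max_j d_j − d_i)] equals Σ_{i ∉ T}(d_i − d_min) + Σ_{i ∈ T}(d_max − d_i), where T is the set of indices of the k largest values d_i. -/
import Mathlib


/-- the minimum of the differentiable top-k transport cost over
all feasible plans equals (and is attained at) the cost of hard top-k
selection of the `k` largest scores. -/
theorem topk_transport_min_eq_hard_topk (m k : ℕ) (hm : 0 < m) (hk : k ≤ m)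
    (d : Fin m → ℝ) (hd : Function.Injective d) (dmin dmax : ℝ)
    (hmin : IsLeast (Set.range d) dmin) (hmax : IsGreatest (Set.range d) dmax)
    (T : Finset (Fin m)) (hT : T.card = k)
    (hTop : ∀ i ∈ T, ∀ j ∉ T, d j ≤ d i) :
    IsLeast { c : ℝ | ∃ Γ : Fin m → Fin 2 → ℝ,
        (∀ i j, 0 ≤ Γ i j) ∧ (∀ i, Γ i 0 + Γ i 1 = 1) ∧
        (∑ i, Γ i 0 = (m : ℝ) - k) ∧ (∑ i, Γ i 1 = (k : ℝ)) ∧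
        c = ∑ i, (Γ i 0 * (d i - dmin) + Γ i 1 * (dmax - d i)) }
      ((∑ i ∈ Tᶜ, (d i - dmin)) + (∑ i ∈ T, (dmax - d i))) := by
  have hcardc : (Tᶜ.card : ℝ) = (m : ℝ) - k := by
    rw [Finset.card_compl, hT, Fintype.card_fin, Nat.cast_sub hk]
  constructor
  · -- membership: the hard top-k plan
    classical
    set Γ₀ : Fin m → Fin 2 → ℝ := fun i j =>
      if i ∈ T then (if j = 0 then 0 else 1) else (if j = 0 then 1 else 0) with hΓ₀
    have h10 : (1 : Fin 2) ≠ 0 := by decide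
    have e0 : ∀ i, Γ₀ i 0 = if i ∈ T then (0:ℝ) else 1 := fun i => by
      by_cases h : i ∈ T <;> simp [hΓ₀, h]
    have e1 : ∀ i, Γ₀ i 1 = if i ∈ T then (1:ℝ) else 0 := fun i => by
      by_cases h : i ∈ T <;> simp [hΓ₀, h, h10]
    have hsum0 : ∑ i, Γ₀ i 0 = (Tᶜ.card : ℝ) := by
      simp_rw [e0]
      rw [← Finset.sum_add_sum_compl T]
      have hA : (∑ i ∈ T, if i ∈ T then (0:ℝ) else 1) = 0 :=
        Finset.sum_eq_zero fun i hi => if_pos hi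
      have hB : (∑ i ∈ Tᶜ, if i ∈ T then (0:ℝ) else 1) = (Tᶜ.card : ℝ) := by
        calc (∑ i ∈ Tᶜ, if i ∈ T then (0:ℝ) else 1) = ∑ _i ∈ Tᶜ, (1:ℝ) :=
              Finset.sum_congr rfl fun i hi => if_neg (Finset.mem_compl.mp hi)
          _ = (Tᶜ.card : ℝ) := by simp
      rw [hA, hB, zero_add]
    refine ⟨Γ₀, ?_, ?_, ?_, ?_, ?_⟩
    · intro i j; rw [hΓ₀]; dsimp only; split_ifs <;> norm_num
    · intro i; rw [e0, e1]; by_cases h : i ∈ T <;> simp [h]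
    · rw [hsum0, hcardc]
    · have : ∑ i, Γ₀ i 1 = ∑ i, (1 - Γ₀ i 0) := by
        refine Finset.sum_congr rfl fun i _ => ?_
        rw [e0 i, e1 i]; by_cases h : i ∈ T <;> simp [h]
      rw [this, Finset.sum_sub_distrib, hsum0, hcardc, Finset.sum_const,
        Finset.card_univ, Fintype.card_fin, nsmul_eq_mul, mul_one]
      ring
    · rw [← Finset.sum_add_sum_compl T (fun i => Γ₀ i 0 * (d i - dmin) + Γ₀ i 1 * (dmax - d i))]
      have hA : ∑ i ∈ T, (Γ₀ i 0 * (d i - dmin) + Γ₀ i 1 * (dmax - d i))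
          = ∑ i ∈ T, (dmax - d i) := by
        refine Finset.sum_congr rfl fun i hi => ?_
        rw [e0 i, e1 i, if_pos hi, if_pos hi]; ring
      have hB : ∑ i ∈ Tᶜ, (Γ₀ i 0 * (d i - dmin) + Γ₀ i 1 * (dmax - d i))
          = ∑ i ∈ Tᶜ, (d i - dmin) := by
        refine Finset.sum_congr rfl fun i hi => ?_
        rw [e0 i, e1 i, if_neg (Finset.mem_compl.mp hi), if_neg (Finset.mem_compl.mp hi)]; ring
      rw [hA, hB]; ring
  · -- lower bound
    rintro c ⟨Γ, hpos, hrow, hcol0, _hcol1, rfl⟩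
    obtain ⟨f, hf⟩ : ∃ f : Fin m → ℝ, ∀ i, f i = 2 * d i - dmin - dmax :=
      ⟨_, fun _ => rfl⟩
    obtain ⟨t, htT, htC⟩ : ∃ t : ℝ, (∀ i ∈ T, t ≤ f i) ∧ ∀ i ∉ T, f i ≤ t := by
      rcases T.eq_empty_or_nonempty with hTe | hTne
      · refine ⟨2 * dmax - dmin - dmax, by simp [hTe], fun i _ => ?_⟩
        rw [hf]; have := hmax.2 ⟨i, rfl⟩; linarith
      · obtain ⟨j, hjT, hjmin⟩ := T.exists_min_image d hTne
        refine ⟨f j, fun i hi => ?_, fun i hi => ?_⟩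
        · rw [hf, hf]; have := hjmin i hi; linarith
        · rw [hf, hf]; have := hTop j hjT i hi; linarith
    have hg1 : ∀ i, Γ i 0 ≤ 1 := fun i => by
      have := hpos i 1; have := hrow i; linarith
    have key : ∑ i ∈ Tᶜ, f i ≤ ∑ i, Γ i 0 * f i := by
      have hsplit : ∑ i, Γ i 0 * f i
          = ∑ i ∈ T, Γ i 0 * f i + ∑ i ∈ Tᶜ, Γ i 0 * f i :=
        (Finset.sum_add_sum_compl T _).symm
      have h1 : ∑ i ∈ T, Γ i 0 * t ≤ ∑ i ∈ T, Γ i 0 * f i := by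
        refine Finset.sum_le_sum fun i hi => ?_
        exact mul_le_mul_of_nonneg_left (htT i hi) (hpos i 0)
      have h2 : ∑ i ∈ Tᶜ, (f i + (Γ i 0 - 1) * t) ≤ ∑ i ∈ Tᶜ, Γ i 0 * f i := by
        refine Finset.sum_le_sum fun i hi => ?_
        have hfi : f i ≤ t := htC i (Finset.mem_compl.mp hi)
        have hle : Γ i 0 - 1 ≤ 0 := by linarith [hg1 i]
        nlinarith
      have expand : ∑ i ∈ T, Γ i 0 * t + ∑ i ∈ Tᶜ, (f i + (Γ i 0 - 1) * t)
          = ∑ i ∈ Tᶜ, f i + (∑ i, Γ i 0) * t - (Tᶜ.card : ℝ) * t := by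
        rw [Finset.sum_add_distrib]
        simp_rw [sub_mul, one_mul]
        rw [Finset.sum_sub_distrib, Finset.sum_const, nsmul_eq_mul,
          ← Finset.sum_mul, ← Finset.sum_mul,
          ← Finset.sum_add_sum_compl T (fun i => Γ i 0), add_mul]
        ring
      have hzero : (∑ i, Γ i 0) * t - (Tᶜ.card : ℝ) * t = 0 := by
        rw [hcol0, hcardc]; ring
      calc ∑ i ∈ Tᶜ, f i
          = ∑ i ∈ T, Γ i 0 * t + ∑ i ∈ Tᶜ, (f i + (Γ i 0 - 1) * t) := by
            rw [expand]; linarith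
        _ ≤ ∑ i ∈ T, Γ i 0 * f i + ∑ i ∈ Tᶜ, Γ i 0 * f i := add_le_add h1 h2
        _ = ∑ i, Γ i 0 * f i := hsplit.symm
    have htarget : (∑ i ∈ Tᶜ, (d i - dmin)) + (∑ i ∈ T, (dmax - d i))
        = ∑ i, (dmax - d i) + ∑ i ∈ Tᶜ, f i := by
      have h1 : ∑ i ∈ Tᶜ, (d i - dmin) = ∑ i ∈ Tᶜ, ((dmax - d i) + f i) := by
        refine Finset.sum_congr rfl fun i _ => by rw [hf]; ring
      rw [h1, Finset.sum_add_distrib, ← Finset.sum_add_sum_compl T (fun i => dmax - d i)]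
      ring
    have hcost : ∑ i, (Γ i 0 * (d i - dmin) + Γ i 1 * (dmax - d i))
        = ∑ i, (dmax - d i) + ∑ i, Γ i 0 * f i := by
      rw [← Finset.sum_add_distrib]
      refine Finset.sum_congr rfl fun i _ => ?_
      have h1 : Γ i 1 = 1 - Γ i 0 := by linarith [hrow i]
      rw [h1, hf]; ring
    rw [htarget, hcost]
    linarith [key]
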